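/- arXiv:1103.2650 — 2 statements merged into one kernel-verified Lean document; each statement's English description precedes it below -/
import Mathlib

section
/- For all natural numbers n, m, r, the identity ∑_{k=0}^{n} ((m+1)(r+1)) / ((m+k+1)(n+r−k+1)) · C(m+2k, k) · C(2n+r−2k, n−k) = ((m+r+2)/(n+m+r+2)) · C(2n+m+r+1, n) holds, where both sides are interpreted as rational numbers. -/
/-!
With the ballot numbers `B(k, m) = (m+1)/(m+k+1) · C(m+2k, k) = C(m+2k, k) - C(m+2k, k-1)`,
the summand is `B(k, m) · B(n-k, r)` and the right-hand side is `B(n, m+r+1)`, so the identity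
is the convolution `∑ B(i, m) B(j, r) = B(n, m+r+1)` over `i + j = n` (the generating function
of `B(·, m)` is the `(m+1)`-st power of the Catalan series). The convolution follows by induction
on `n` and then on `m` from the Pascal-type recurrences `B(k+1, m+1) = B(k+1, m) + B(k, m+2)` and
`B(k+1, 0) = B(k, 1)`, which are immediate in the difference form.
-/

open Finset

def ballot : ℕ → ℕ → ℤ
  | 0, _ => 1
  | k + 1, m => ((m + 2 * k + 2).choose (k + 1) : ℤ) - (m + 2 * k + 2).choose k

@[simp]
lemma ballot_zero_left (m : ℕ) : ballot 0 m = 1 := rfl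

lemma ballot_succ_succ (k m : ℕ) :
    ballot (k + 1) (m + 1) = ballot (k + 1) m + ballot k (m + 2) := by
  cases k with
  | zero =>
    simp only [ballot, mul_zero, add_zero, zero_add, Nat.choose_one_right, Nat.choose_zero_right]
    push_cast
    ring
  | succ j =>
    simp only [ballot, show m + 1 + 2 * (j + 1) + 2 = m + 2 * j + 4 + 1 by ring,
      show m + 2 + 2 * j + 2 = m + 2 * j + 4 by ring,
      show m + 2 * (j + 1) + 2 = m + 2 * j + 4 by ring,
      Nat.choose_succ_succ (m + 2 * j + 4) (j + 1), Nat.choose_succ_succ (m + 2 * j + 4) j]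
    push_cast
    ring

lemma ballot_succ_zero (k : ℕ) : ballot (k + 1) 0 = ballot k 1 := by
  cases k with
  | zero => rfl
  | succ j =>
    simp only [ballot, show 0 + 2 * (j + 1) + 2 = 2 * j + 3 + 1 by ring,
      show 1 + 2 * j + 2 = 2 * j + 3 by ring,
      Nat.choose_succ_succ (2 * j + 3) (j + 1), Nat.choose_succ_succ (2 * j + 3) j]
    have hsymm : (2 * j + 3).choose (j + 2) = (2 * j + 3).choose (j + 1) :=
      Nat.choose_symm_half (j + 1)
    rw [hsymm]
    push_cast
    ring

lemma cast_ballot (k m : ℕ) :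
    (ballot k m : ℚ) = ((m : ℚ) + 1) / ((m : ℚ) + k + 1) * (m + 2 * k).choose k := by
  cases k with
  | zero => simp [div_self (by positivity : (m : ℚ) + 1 ≠ 0)]
  | succ k =>
    have hpascal := Nat.choose_succ_right_eq (m + 2 * k + 2) k
    rw [show m + 2 * k + 2 - k = m + k + 2 by omega] at hpascal
    have hpascal' : ((m + 2 * k + 2).choose (k + 1) : ℚ) * (k + 1)
        = (m + 2 * k + 2).choose k * (m + k + 2) := by exact_mod_cast hpascal
    rw [ballot, show m + 2 * (k + 1) = m + 2 * k + 2 by ring]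
    push_cast
    field_simp
    linear_combination hpascal'

theorem sum_antidiagonal_ballot_mul_ballot (n m r : ℕ) :
    ∑ p ∈ antidiagonal n, ballot p.1 m * ballot p.2 r = ballot n (m + r + 1) := by
  induction n generalizing m with
  | zero => simp
  | succ n ihn =>
    induction m with
    | zero =>
      simp only [Nat.sum_antidiagonal_succ, ballot_succ_zero, ihn, ballot_zero_left, one_mul,
        zero_add]
      rw [ballot_succ_succ, show 1 + r + 1 = r + 2 by ring, add_comm]
    | succ m ihm =>
      rw [Nat.sum_antidiagonal_succ] at ihm ⊢
      simp only [ballot_succ_succ _ m, add_mul, sum_add_distrib, ihn, ballot_zero_left] at ihm ⊢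
      rw [show m + 1 + r + 1 = m + r + 1 + 1 by ring, ballot_succ_succ, ← ihm,
        show m + 2 + r + 1 = m + r + 1 + 2 by ring]
      ring

theorem combiwalk4 (n m r : ℕ) :
    ∑ k ∈ Finset.range (n + 1),
      (((m : ℚ) + 1) * ((r : ℚ) + 1)) /
          (((m : ℚ) + k + 1) * ((n : ℚ) + r - k + 1)) *
        (Nat.choose (m + 2 * k) k : ℚ) *
        (Nat.choose (2 * n + r - 2 * k) (n - k) : ℚ)
    = ((m : ℚ) + r + 2) / ((n : ℚ) + m + r + 2) *
        (Nat.choose (2 * n + m + r + 1) n : ℚ) := by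
  have hrhs : ((m : ℚ) + r + 2) / ((n : ℚ) + m + r + 2) *
      (Nat.choose (2 * n + m + r + 1) n : ℚ) = ballot n (m + r + 1) := by
    rw [cast_ballot, show m + r + 1 + 2 * n = 2 * n + m + r + 1 by ring]
    push_cast
    ring
  rw [hrhs, ← sum_antidiagonal_ballot_mul_ballot, Nat.sum_antidiagonal_eq_sum_range_succ_mk]
  push_cast
  refine sum_congr rfl fun k hk => ?_
  have hkn : k ≤ n := Nat.lt_succ_iff.mp (mem_range.mp hk)
  rw [cast_ballot, cast_ballot, Nat.cast_sub hkn,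
    show 2 * n + r - 2 * k = r + 2 * (n - k) by omega,
    show (r : ℚ) + (n - k) + 1 = n + r - k + 1 by ring, mul_div_mul_comm]
  ring
end

section
/- Let N be a natural number and m an integer with 0 ≤ m ≤ N and N + m even, and set μ = (N+m)/2. Then the number of walks of length N from 0 to m all of whose partial sums are ≥ −3 equals ((m+4)(N+1)·((m+2)(m+6) + N(N+2)) / (2(μ+1)(μ+2)(μ+3)(μ+4))) · C(N, μ), where this quotient is an equality of rational numbers with the cardinality cast to ℚ. -/
/-!
By the reflection principle, the walks from `0` to `m` that go below `-a` are in bijection with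
the unrestricted walks from `0` to `-2a - 2 - m`, so with `N + m = 2k` there are
`C(N, k) - C(N, k + a + 1)` walks staying `≥ -a`. We verify this by induction on `N`: the count
satisfies `f(N + 1, m) = f(N, m - 1) + f(N, m + 1)` above the barrier, the binomial difference
satisfies the same Pascal recurrence, and both vanish on the line `m = -a - 1`. For `a = 3` the
closed form follows from `C(N, k + 4) (k+1)(k+2)(k+3)(k+4) = C(N, k) (N-k)(N-k-1)(N-k-2)(N-k-3)`.
-/

open Finset

def partialSum {N : ℕ} (s : Fin N → ℤ) (j : ℕ) : ℤ :=
  ∑ i ∈ univ.filter (fun i : Fin N => (i : ℕ) < j), s i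

def walksAbove (a N : ℕ) (m : ℤ) : Set (Fin N → ℤ) :=
  {s | (∀ j, s j = -1 ∨ s j = 1) ∧ ∑ i, s i = m ∧ ∀ j ≤ N, -(a : ℤ) ≤ partialSum s j}

lemma partialSum_self {N : ℕ} (s : Fin N → ℤ) : partialSum s N = ∑ i, s i := by
  rw [partialSum, filter_true_of_mem fun i _ => i.isLt]

lemma partialSum_init {N j : ℕ} (s : Fin (N + 1) → ℤ) (hj : j ≤ N) :
    partialSum (Fin.init s) j = partialSum s j := by
  simp only [partialSum, sum_filter, Fin.sum_univ_castSucc, Fin.val_last, Fin.val_castSucc,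
    Fin.init, not_lt.mpr hj, if_false, add_zero]

section walksAbove

variable {a N : ℕ} {m : ℤ}

lemma neg_le_of_mem_walksAbove {s : Fin N → ℤ} (hs : s ∈ walksAbove a N m) : -(a : ℤ) ≤ m := by
  simpa only [partialSum_self, hs.2.1] using hs.2.2 N le_rfl

lemma walksAbove_eq_empty_of_lt (hm : m < -(a : ℤ)) : walksAbove a N m = ∅ :=
  Set.eq_empty_of_forall_notMem fun _ hs => (neg_le_of_mem_walksAbove hs).not_gt hm

lemma walksAbove_eq_empty_of_lt_neg_length (hm : m < -(N : ℤ)) : walksAbove a N m = ∅ := by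
  refine Set.eq_empty_of_forall_notMem fun s hs => hm.not_ge ?_
  have hstep (i : Fin N) : (-1 : ℤ) ≤ s i := by rcases hs.1 i with h | h <;> simp [h]
  simpa [hs.2.1] using sum_le_sum fun i (_ : i ∈ univ) => hstep i

lemma walksAbove_finite (a N : ℕ) (m : ℤ) : (walksAbove a N m).Finite :=
  (Set.Finite.pi fun _ => Set.toFinite {-1, 1}).subset fun _ hs j _ => hs.1 j

lemma ncard_walksAbove_zero (a : ℕ) (m : ℤ) :
    (walksAbove a 0 m).ncard = if m = 0 then 1 else 0 := by
  split_ifs with hm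
  · rw [Set.ncard_eq_one]
    refine ⟨Fin.elim0, Set.eq_singleton_iff_unique_mem.mpr ⟨?_, fun _ _ => Subsingleton.elim _ _⟩⟩
    exact ⟨fun j => j.elim0, by simp [hm], fun j _ => by simp [partialSum]⟩
  · rw [Set.ncard_eq_zero (walksAbove_finite a 0 m)]
    exact Set.eq_empty_of_forall_notMem fun s hs => hm (by simpa using hs.2.1.symm)

lemma mem_walksAbove_succ_iff (s : Fin (N + 1) → ℤ) :
    s ∈ walksAbove a (N + 1) m ↔ (s (Fin.last N) = -1 ∨ s (Fin.last N) = 1) ∧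
      Fin.init s ∈ walksAbove a N (m - s (Fin.last N)) ∧ -(a : ℤ) ≤ m := by
  have hsum : ∑ i, s i = ∑ i, Fin.init s i + s (Fin.last N) := Fin.sum_univ_castSucc s
  constructor
  · intro hs
    refine ⟨hs.1 _, ⟨fun j => hs.1 _, by linarith [hs.2.1], fun j hj => ?_⟩,
      neg_le_of_mem_walksAbove hs⟩
    rw [partialSum_init s hj]
    exact hs.2.2 j (by omega)
  · rintro ⟨hlast, hinit, hm⟩
    refine ⟨Fin.lastCases hlast hinit.1, by linarith [hinit.2.1], fun j hj => ?_⟩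
    rcases hj.lt_or_eq with hj | rfl
    · rw [← partialSum_init s (by omega)]
      exact hinit.2.2 j (by omega)
    · rwa [partialSum_self, hsum, hinit.2.1, sub_add_cancel]

lemma walksAbove_succ_eq_union (hm : -(a : ℤ) ≤ m) :
    walksAbove a (N + 1) m =
      (fun s => Fin.snoc (α := fun _ => ℤ) s 1) '' walksAbove a N (m - 1) ∪
        (fun s => Fin.snoc (α := fun _ => ℤ) s (-1)) '' walksAbove a N (m + 1) := by
  ext s
  have mem_image (t : ℤ) (A : Set (Fin N → ℤ)) :
      s ∈ (fun x => Fin.snoc (α := fun _ => ℤ) x t) '' A ↔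
        Fin.init s ∈ A ∧ s (Fin.last N) = t := by
    constructor
    · rintro ⟨x, hx, rfl⟩
      simpa only [Fin.init_snoc, Fin.snoc_last, and_true] using hx
    · rintro ⟨hx, rfl⟩
      exact ⟨_, hx, Fin.snoc_init_self s⟩
  rw [Set.mem_union, mem_image, mem_image, mem_walksAbove_succ_iff]
  constructor
  · rintro ⟨h | h, hinit, -⟩ <;> rw [h] at hinit
    · exact Or.inr ⟨by rwa [sub_neg_eq_add] at hinit, h⟩
    · exact Or.inl ⟨hinit, h⟩
  · rintro (⟨hinit, h⟩ | ⟨hinit, h⟩) <;> rw [h]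
    · exact ⟨Or.inr rfl, hinit, hm⟩
    · exact ⟨Or.inl rfl, by rwa [sub_neg_eq_add], hm⟩

lemma ncard_walksAbove_succ (hm : -(a : ℤ) ≤ m) :
    (walksAbove a (N + 1) m).ncard =
      (walksAbove a N (m - 1)).ncard + (walksAbove a N (m + 1)).ncard := by
  have hinj (t : ℤ) : Function.Injective fun s : Fin N → ℤ => Fin.snoc (α := fun _ => ℤ) s t :=
    fun _ _ h => (Fin.snoc_inj.mp h).1
  have hdisj : Disjoint ((fun s => Fin.snoc (α := fun _ => ℤ) s 1) '' walksAbove a N (m - 1))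
      ((fun s => Fin.snoc (α := fun _ => ℤ) s (-1)) '' walksAbove a N (m + 1)) := by
    rw [Set.disjoint_left]
    rintro _ ⟨x, -, rfl⟩ ⟨y, -, h⟩
    simpa using congrFun h (Fin.last N)
  rw [walksAbove_succ_eq_union hm, Set.ncard_union_eq hdisj ((walksAbove_finite a N _).image _)
    ((walksAbove_finite a N _).image _), Set.ncard_image_of_injective _ (hinj 1),
    Set.ncard_image_of_injective _ (hinj (-1))]

/-- The line `m = -a - 1` is admitted because there both sides vanish, which closes the induction
at the barrier. -/
theorem ncard_walksAbove {k : ℕ} (hm : -(a : ℤ) - 1 ≤ m) (hk : N + m = 2 * k) :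
    ((walksAbove a N m).ncard : ℤ) = N.choose k - N.choose (k + a + 1) := by
  induction N generalizing k m with
  | zero =>
    rw [ncard_walksAbove_zero]
    rcases k with _ | k
    · simp [show m = 0 by omega]
    · simp [show m ≠ 0 by omega]
  | succ N ih =>
    rcases hm.eq_or_lt with rfl | hm
    · rw [walksAbove_eq_empty_of_lt (by omega), Set.ncard_empty,
        Nat.choose_symm_of_eq_add (show N + 1 = k + (k + a + 1) by omega)]
      simp
    rw [ncard_walksAbove_succ (by omega), Nat.cast_add]
    rcases k with _ | k
    · rw [walksAbove_eq_empty_of_lt_neg_length (by omega), Set.ncard_empty,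
        ih (k := 0) (by omega) (by omega), zero_add, Nat.choose_succ_succ,
        Nat.choose_eq_zero_of_lt (show N < a by omega)]
      simp
    · rw [ih (k := k) (by omega) (by omega), ih (k := k + 1) (by omega) (by omega),
        Nat.choose_succ_succ, show k + 1 + a + 1 = (k + a + 1) + 1 by ring, Nat.choose_succ_succ]
      push_cast
      ring

end walksAbove

lemma cast_choose_succ_mul {R : Type*} [CommRing R] (n k : ℕ) :
    (n.choose (k + 1) : R) * (k + 1) = n.choose k * (n - k) := by
  rcases le_or_gt k n with hkn | hnk
  · rw [← Nat.cast_sub hkn, ← Nat.cast_succ, ← Nat.cast_mul, ← Nat.cast_mul,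
      Nat.choose_succ_right_eq]
  · simp [Nat.choose_eq_zero_of_lt hnk, Nat.choose_eq_zero_of_lt (hnk.trans (Nat.lt_succ_self k))]

lemma cast_choose_add_mul_prod {R : Type*} [CommRing R] (n k r : ℕ) :
    (n.choose (k + r) : R) * ∏ i ∈ range r, ((k : R) + i + 1) =
      n.choose k * ∏ i ∈ range r, ((n : R) - k - i) := by
  induction r with
  | zero => simp
  | succ r ih =>
    have hstep := cast_choose_succ_mul (R := R) n (k + r)
    rw [← add_assoc, prod_range_succ, prod_range_succ]
    push_cast at hstep
    linear_combination (∏ i ∈ range r, ((k : R) + i + 1)) * hstep + ((n : R) - k - r) * ih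

theorem walk_ge_neg_three_count_general (N : ℕ) (m : ℤ) (hm0 : 0 ≤ m)
    (heven : Even ((N : ℤ) + m)) (μ : ℤ) (hμ : μ = ((N : ℤ) + m) / 2) :
    (Nat.card {s : Fin N → ℤ //
        (∀ j, s j = -1 ∨ s j = 1) ∧
        (∑ i, s i) = m ∧
        ∀ j ≤ N, -3 ≤ (∑ i ∈ Finset.univ.filter (fun i : Fin N => (i : ℕ) < j), s i)} : ℚ)
      = ((m : ℚ) + 4) * ((N : ℚ) + 1) *
            (((m : ℚ) + 2) * ((m : ℚ) + 6) + (N : ℚ) * ((N : ℚ) + 2)) /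
          (2 * ((μ : ℚ) + 1) * ((μ : ℚ) + 2) * ((μ : ℚ) + 3) * ((μ : ℚ) + 4)) *
          (Nat.choose N μ.toNat : ℚ) := by
  obtain ⟨k, hk⟩ : ∃ k : ℕ, (N : ℤ) + m = 2 * k := by
    obtain ⟨r, hr⟩ := heven
    exact ⟨r.toNat, by omega⟩
  obtain rfl : μ = k := by omega
  have hcount : ((walksAbove 3 N m).ncard : ℚ) = N.choose k - N.choose (k + 4) := by
    exact_mod_cast ncard_walksAbove (a := 3) (by omega) hk
  have hratio := cast_choose_add_mul_prod (R := ℚ) N k 4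
  simp only [prod_range_succ, prod_range_zero, one_mul] at hratio
  have hmk : (m : ℚ) = 2 * k - N := by exact_mod_cast (show m = 2 * k - N by omega)
  change (Nat.card (walksAbove 3 N m) : ℚ) = _
  rw [Nat.card_coe_set_eq, hcount, Int.toNat_natCast, hmk, Int.cast_natCast, div_mul_eq_mul_div,
    eq_div_iff (by positivity)]
  linear_combination (-2 : ℚ) * hratio

theorem walk_ge_neg_three_count (N : ℕ) (m : ℤ) (hm0 : 0 ≤ m) (hmN : m ≤ (N : ℤ))
    (heven : Even ((N : ℤ) + m)) (μ : ℤ) (hμ : μ = ((N : ℤ) + m) / 2) :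
    (Nat.card {s : Fin N → ℤ //
        (∀ j, s j = -1 ∨ s j = 1) ∧
        (∑ i, s i) = m ∧
        ∀ j ≤ N, -3 ≤ (∑ i ∈ Finset.univ.filter (fun i : Fin N => (i : ℕ) < j), s i)} : ℚ)
      = ((m : ℚ) + 4) * ((N : ℚ) + 1) *
            (((m : ℚ) + 2) * ((m : ℚ) + 6) + (N : ℚ) * ((N : ℚ) + 2)) /
          (2 * ((μ : ℚ) + 1) * ((μ : ℚ) + 2) * ((μ : ℚ) + 3) * ((μ : ℚ) + 4)) *
          (Nat.choose N μ.toNat : ℚ) :=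
  walk_ge_neg_three_count_general N m hm0 heven μ hμ
end
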